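/- arXiv:2603.16097 — 2 statements merged into one kernel-verified Lean document; each statement's English description precedes it below -/
import Mathlib

section
/- Geometric comparison of twisted rectangles with parallelohedra: let e₁,…,e_m be unit vectors in ℝⁿ (m ≥ n) such that any n of them are linearly independent, and for r ∈ (ℝ₊)^m define the twisted rectangle R(x,r) = {x + λ₁e₁ + ⋯ + λ_m e_m : |λ_j| < r_j}. If r_{l₁},…,r_{l_n} are the n largest among r₁,…,r_m and R_𝔩(x,r) := {x + Σ_j λ_{l_j} e_{l_j} : |λ_{l_j}| < r_{l_j}}, then there is a constant γ̃₀ ∈ (0,1), depending only on e₁,…,e_m, such that R_𝔩(x,r) ⊂ R(x,r) ⊂ R_𝔩(x, γ̃₀⁻¹ r) for all x ∈ ℝⁿ. -/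
open MeasureTheory

/-- The twisted rectangle `R(x,r) = {x + Σ λ_j e_j : |λ_j| < r_j}`. -/
def twistedRect {n m : ℕ} (e : Fin m → EuclideanSpace ℝ (Fin n))
    (x : EuclideanSpace ℝ (Fin n)) (r : Fin m → ℝ) : Set (EuclideanSpace ℝ (Fin n)) :=
  {y | ∃ lam : Fin m → ℝ, (∀ j, |lam j| < r j) ∧ y = x + ∑ j, lam j • e j}

/-- The parallelohedron `R_𝔩(x,r) = {x + Σ_{j<n} λ_j e_{l_j} : |λ_j| < r_{l_j}}`. -/
def subRect {n m : ℕ} (e : Fin m → EuclideanSpace ℝ (Fin n)) (l : Fin n → Fin m)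
    (x : EuclideanSpace ℝ (Fin n)) (r : Fin m → ℝ) : Set (EuclideanSpace ℝ (Fin n)) :=
  {y | ∃ lam : Fin n → ℝ, (∀ j, |lam j| < r (l j)) ∧ y = x + ∑ j, lam j • e (l j)}

open Finset

section Splitting

variable {ι κ M : Type*} [Fintype ι] [Fintype κ] [DecidableEq κ] [AddCommMonoid M]

theorem Finset.sum_eq_sum_comp_add_sum_compl_image {l : ι → κ} (hl : Function.Injective l)
    (f : κ → M) : ∑ μ, f μ = ∑ j, f (l j) + ∑ μ ∈ (univ.image l)ᶜ, f μ := by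
  rw [← sum_add_sum_compl (univ.image l), sum_image fun a _ b _ h => hl h]

theorem Finset.mem_compl_image_univ_iff {l : ι → κ} {μ : κ} :
    μ ∈ (univ.image l)ᶜ ↔ μ ∉ Set.range l := by
  simp

end Splitting

section Rectangles

variable {n m : ℕ} {e : Fin m → EuclideanSpace ℝ (Fin n)} {l : Fin n → Fin m}
  {x : EuclideanSpace ℝ (Fin n)} {r : Fin m → ℝ}

theorem subRect_subset_twistedRect (hl : Function.Injective l)
    (hr : ∀ μ, μ ∉ Set.range l → 0 < r μ) : subRect e l x r ⊆ twistedRect e x r := by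
  classical
  rintro y ⟨lam, hlam, rfl⟩
  have extend_off_range : ∀ μ ∈ (univ.image l)ᶜ, Function.extend l lam 0 μ = 0 := fun μ hμ =>
    Function.extend_apply' _ _ _ fun ⟨j, hj⟩ => mem_compl_image_univ_iff.1 hμ ⟨j, hj⟩
  refine ⟨Function.extend l lam 0, fun μ => ?_, ?_⟩
  · by_cases hμ : μ ∈ Set.range l
    · obtain ⟨j, rfl⟩ := hμ
      simpa [hl.extend_apply] using hlam j
    · simpa [extend_off_range μ (mem_compl_image_univ_iff.2 hμ)] using hr μ hμ
  · rw [sum_eq_sum_comp_add_sum_compl_image hl (fun μ => Function.extend l lam 0 μ • e μ),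
      sum_eq_zero (s := (univ.image l)ᶜ) fun μ hμ => by rw [extend_off_range μ hμ, zero_smul]]
    simp [hl.extend_apply]

/-- Since every `r μ` off the range of `l` is dominated by `r (l j)`, rewriting those `e μ` in
the basis `e ∘ l` moves the `j`-th coordinate by less than `r (l j) * K`. -/
theorem twistedRect_subset_subRect (hl : Function.Injective l) (c : Fin m → Fin n → ℝ)
    (hc : ∀ μ, μ ∉ Set.range l → e μ = ∑ j, c μ j • e (l j))
    (hmax : ∀ (j : Fin n) (μ : Fin m), μ ∉ Set.range l → r μ ≤ r (l j))
    {K : ℝ} (hK : ∑ μ, ∑ j, |c μ j| ≤ K) :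
    twistedRect e x r ⊆ subRect e l x (fun i => (1 + K) * r i) := by
  classical
  rintro y ⟨lam, hlam, rfl⟩
  set C := (univ.image l)ᶜ
  have hC : ∀ μ ∈ C, μ ∉ Set.range l := fun μ => mem_compl_image_univ_iff.1
  refine ⟨fun j => lam (l j) + ∑ μ ∈ C, lam μ * c μ j, fun j => ?_, ?_⟩
  · have hcol : ∑ μ ∈ C, |c μ j| ≤ K :=
      calc ∑ μ ∈ C, |c μ j| ≤ ∑ μ, |c μ j| :=
            sum_le_sum_of_subset_of_nonneg (subset_univ _) fun _ _ _ => abs_nonneg _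
        _ ≤ ∑ μ, ∑ j', |c μ j'| := sum_le_sum fun μ _ =>
            single_le_sum (f := fun j' => |c μ j'|) (fun j' _ => abs_nonneg (c μ j'))
              (mem_univ j)
        _ ≤ K := hK
    have hrj : 0 ≤ r (l j) := (abs_nonneg _).trans (hlam (l j)).le
    calc |lam (l j) + ∑ μ ∈ C, lam μ * c μ j|
        ≤ |lam (l j)| + ∑ μ ∈ C, |lam μ| * |c μ j| := by
          refine (abs_add_le _ _).trans (add_le_add_right ?_ _)
          simpa only [abs_mul] using abs_sum_le_sum_abs (fun μ => lam μ * c μ j) C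
      _ ≤ |lam (l j)| + ∑ μ ∈ C, r (l j) * |c μ j| := by
          gcongr with μ hμ
          exact (hlam μ).le.trans (hmax j μ (hC μ hμ))
      _ ≤ |lam (l j)| + r (l j) * K := by
          rw [← mul_sum]
          gcongr
      _ < (1 + K) * r (l j) := by linarith [hlam (l j)]
  · have hexpand : ∑ μ ∈ C, lam μ • e μ = ∑ j, (∑ μ ∈ C, lam μ * c μ j) • e (l j) := by
      rw [sum_congr rfl fun μ hμ => by rw [hc μ (hC μ hμ)]]
      simp_rw [smul_sum, smul_smul, sum_smul]
      exact sum_comm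
    rw [sum_eq_sum_comp_add_sum_compl_image hl, hexpand, ← sum_add_distrib]
    simp_rw [add_smul]

end Rectangles

theorem linearIndependent_comp_of_forall_card_eq {R V : Type*} [Semiring R] [AddCommMonoid V]
    [Module R V] {n m : ℕ} {e : Fin m → V}
    (hindep : ∀ s : Finset (Fin m), s.card = n → LinearIndependent R (fun i : s => e i))
    {l : Fin n → Fin m} (hl : Function.Injective l) : LinearIndependent R (e ∘ l) := by
  classical
  have hmem : ∀ j, l j ∈ univ.image l := fun j => mem_image_of_mem l (mem_univ j)
  refine (hindep _ (by simp [card_image_of_injective _ hl])).comp (fun j => ⟨l j, hmem j⟩) ?_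
  exact fun a b h => hl (congrArg Subtype.val h)

theorem LinearIndependent.exists_sum_smul_eq_of_card_eq_finrank {K V ι : Type*} [DivisionRing K]
    [AddCommGroup V] [Module K V] [FiniteDimensional K V] [Fintype ι] {b : ι → V}
    (hb : LinearIndependent K b) (hcard : Fintype.card ι = Module.finrank K V) (v : V) :
    ∃ c : ι → K, ∑ i, c i • b i = v :=
  (Submodule.mem_span_range_iff_exists_fun K).1
    (hb.span_eq_top_of_card_eq_finrank' hcard ▸ Submodule.mem_top)

theorem twistedRect_subRect_comparison_general {n m : ℕ}
    (e : Fin m → EuclideanSpace ℝ (Fin n))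
    (hindep : ∀ s : Finset (Fin m), s.card = n →
      LinearIndependent ℝ (fun i : s => e i)) :
    ∃ γ ∈ Set.Ioo (0 : ℝ) 1,
      ∀ (r : Fin m → ℝ), (∀ j, 0 < r j) →
      ∀ (l : Fin n → Fin m), Function.Injective l →
        (∀ (j : Fin n) (μ : Fin m), μ ∉ Set.range l → r μ ≤ r (l j)) →
      ∀ x : EuclideanSpace ℝ (Fin n),
        subRect e l x r ⊆ twistedRect e x r ∧
        twistedRect e x r ⊆ subRect e l x (fun i => γ⁻¹ * r i) := by
  have hcoeff : ∀ (l : Fin n → Fin m) (μ : Fin m), ∃ c : Fin n → ℝ,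
      Function.Injective l → e μ = ∑ j, c j • e (l j) := fun l μ => by
    by_cases hl : Function.Injective l
    · obtain ⟨c, hc⟩ := (linearIndependent_comp_of_forall_card_eq hindep hl)
        |>.exists_sum_smul_eq_of_card_eq_finrank (by simp) (e μ)
      exact ⟨c, fun _ => hc.symm⟩
    · exact ⟨0, fun h => absurd h hl⟩
  choose c hc using hcoeff
  -- `1 + 𝒜` could equal `1`; the extra `1` keeps `γ` strictly below `1`.
  set 𝒜 := ∑ l, ∑ μ, ∑ j, |c l μ j|
  have h𝒜 : 0 ≤ 𝒜 := by positivity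
  refine ⟨(2 + 𝒜)⁻¹, ⟨by positivity, inv_lt_one_of_one_lt₀ (by linarith)⟩, ?_⟩
  intro r hr l hl hmax x
  refine ⟨subRect_subset_twistedRect hl fun μ _ => hr μ, ?_⟩
  have hK : ∑ μ, ∑ j, |c l μ j| ≤ 1 + 𝒜 :=
    (single_le_sum (f := fun l' => ∑ μ, ∑ j, |c l' μ j|) (fun _ _ => by positivity)
      (mem_univ l)).trans (by linarith)
  simpa only [inv_inv, ← add_assoc, one_add_one_eq_two] using
    twistedRect_subset_subRect hl (c l) (fun μ _ => hc l μ hl) hmax hK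

/-- Geometric comparison of twisted rectangles with parallelohedra:
there is `γ̃₀ ∈ (0,1)`, depending only on `e₁,…,e_m`, with
`R_𝔩(x,r) ⊆ R(x,r) ⊆ R_𝔩(x, γ̃₀⁻¹ r)` whenever `r_{l₁},…,r_{l_n}` are the `n`
largest entries of `r`. -/
theorem twistedRect_subRect_comparison {n m : ℕ} (hnm : n ≤ m)
    (e : Fin m → EuclideanSpace ℝ (Fin n))
    (hunit : ∀ j, ‖e j‖ = 1)
    (hindep : ∀ s : Finset (Fin m), s.card = n →
      LinearIndependent ℝ (fun i : s => e i)) :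
    ∃ γ ∈ Set.Ioo (0 : ℝ) 1,
      ∀ (r : Fin m → ℝ), (∀ j, 0 < r j) →
      ∀ (l : Fin n → Fin m), Function.Injective l →
        (∀ (j : Fin n) (μ : Fin m), μ ∉ Set.range l → r μ ≤ r (l j)) →
      ∀ x : EuclideanSpace ℝ (Fin n),
        subRect e l x r ⊆ twistedRect e x r ∧
        twistedRect e x r ⊆ subRect e l x (fun i => γ⁻¹ * r i) :=
  twistedRect_subRect_comparison_general e hindep
end

section
/- The L¹ bound on F₀: for ψ ∈ C_c^∞(ℝⁿ) supported in the dual cone Ω* and F₀(x+iy) = ∫ e^{2πi(x+iy)·ξ}ψ(ξ)dξ, one has |F₀(x+iy)| ≲ min(1, |x|^{-2n}) uniformly in y ∈ Ω, so that sup_{y∈Ω} ∫_{ℝⁿ}|F₀(x+iy)| dx < ∞, i.e. F₀ ∈ H¹(T_Ω). -/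
open MeasureTheory Complex

/-- The open cone generated by `e₁,…,e_m`. -/
def coneOf {n m : ℕ} (e : Fin m → (Fin n → ℝ)) : Set (Fin n → ℝ) :=
  {y | ∃ lam : Fin m → ℝ, (∀ j, 0 < lam j) ∧ y = ∑ j, lam j • e j}

/-- The point `x + iy ∈ ℂⁿ`. -/
noncomputable def mkC {n : ℕ} (x y : Fin n → ℝ) : Fin n → ℂ :=
  fun j => (x j : ℂ) + (y j : ℂ) * Complex.I

/-- The dual cone `Ω* = {ξ : y·ξ ≥ 0 for all y ∈ Ω}`. -/
def dualCone {n : ℕ} (Ω : Set (Fin n → ℝ)) : Set (Fin n → ℝ) :=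
  {ξ | ∀ y ∈ Ω, 0 ≤ ∑ j, y j * ξ j}

/-- The Fourier–Laplace transform `F₀(z) = ∫ e^{2πi z·ξ} ψ(ξ) dξ`. -/
noncomputable def FL {n : ℕ} (ψ : (Fin n → ℝ) → ℝ) (z : Fin n → ℂ) : ℂ :=
  ∫ ξ : Fin n → ℝ, Complex.exp (2 * Real.pi * Complex.I * ∑ j, z j * (ξ j : ℂ)) * (ψ ξ : ℂ)

/-- The Euclidean norm of `x ∈ ℝⁿ`. -/
noncomputable def enorm' {n : ℕ} (x : Fin n → ℝ) : ℝ := Real.sqrt (∑ j, (x j) ^ 2)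

noncomputable def Lz {n : ℕ} (z : Fin n → ℂ) : (Fin n → ℝ) →L[ℝ] ℂ :=
  ∑ j, (ContinuousLinearMap.proj (R := ℝ) (φ := fun _ : Fin n => ℝ) j).smulRight
    (2 * Real.pi * Complex.I * z j)

lemma Lz_apply {n : ℕ} (z : Fin n → ℂ) (ξ : Fin n → ℝ) :
    Lz z ξ = 2 * Real.pi * Complex.I * ∑ j, z j * (ξ j : ℂ) := by
  simp [Lz, ContinuousLinearMap.sum_apply, Finset.mul_sum, Complex.real_smul]
  apply Finset.sum_congr rfl; intro j _; ring

lemma Lz_single {n : ℕ} (z : Fin n → ℂ) (i : Fin n) :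
    Lz z (Pi.single i 1) = 2 * Real.pi * Complex.I * z i := by
  rw [Lz_apply]
  congr 1
  rw [Finset.sum_eq_single i]
  · simp
  · intro b _ hb; simp [Pi.single_apply, hb]
  · simp

lemma Lz_hasFDerivAt {n : ℕ} (z : Fin n → ℂ) (ξ : Fin n → ℝ) :
    HasFDerivAt (fun ξ => Complex.exp (Lz z ξ)) (Complex.exp (Lz z ξ) • Lz z) ξ :=
  ((Lz z).hasFDerivAt (x := ξ)).cexp

/-- iterated directional derivative operator -/
noncomputable def Dop {n : ℕ} (i : Fin n) (φ : (Fin n → ℝ) → ℂ) : (Fin n → ℝ) → ℂ :=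
  fun ξ => fderiv ℝ φ ξ (Pi.single i 1)

lemma Dop_contDiff {n : ℕ} {i : Fin n} {φ : (Fin n → ℝ) → ℂ} (h : ContDiff ℝ (⊤ : ℕ∞) φ) :
    ContDiff ℝ (⊤ : ℕ∞) (Dop i φ) :=
  (h.fderiv_right (by simp)).clm_apply contDiff_const

lemma Dop_tsupport {n : ℕ} {i : Fin n} {φ : (Fin n → ℝ) → ℂ} :
    tsupport (Dop i φ) ⊆ tsupport φ := by
  refine subset_trans (closure_mono ?_) (tsupport_fderiv_subset ℝ)
  intro ξ hξ
  simp only [Function.mem_support] at hξ ⊢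
  intro h0
  exact hξ (by simp [Dop, h0])

lemma Dop_compactSupport {n : ℕ} {i : Fin n} {φ : (Fin n → ℝ) → ℂ}
    (h : HasCompactSupport φ) : HasCompactSupport (Dop i φ) :=
  IsCompact.of_isClosed_subset (h.fderiv ℝ) isClosed_closure
    (subset_trans (closure_mono (fun ξ hξ => by
      simp only [Function.mem_support] at hξ ⊢
      intro h0; exact hξ (by simp [Dop, h0])))
      subset_rfl)

lemma Dop_continuous {n : ℕ} {i : Fin n} {φ : (Fin n → ℝ) → ℂ} (h : ContDiff ℝ (⊤ : ℕ∞) φ) :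
    Continuous (Dop i φ) :=
  (Dop_contDiff h).continuous

lemma step {n : ℕ} (z : Fin n → ℂ) (φ : (Fin n → ℝ) → ℂ)
    (h1 : ContDiff ℝ (⊤ : ℕ∞) φ) (h2 : HasCompactSupport φ) (i : Fin n) :
    (∫ ξ : Fin n → ℝ, Complex.exp (Lz z ξ) * Dop i φ ξ)
      = -(2 * Real.pi * Complex.I * z i) * ∫ ξ : Fin n → ℝ, Complex.exp (Lz z ξ) * φ ξ := by
  have contE : Continuous fun ξ : Fin n → ℝ => Complex.exp (Lz z ξ) :=
    Complex.continuous_exp.comp (Lz z).continuous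
  have hfd : fderiv ℝ (fun ξ => Complex.exp (Lz z ξ)) = fun ξ => Complex.exp (Lz z ξ) • Lz z :=
    funext fun ξ => (Lz_hasFDerivAt z ξ).fderiv
  have I1 : Integrable (fun ξ : Fin n → ℝ =>
      fderiv ℝ (fun ξ => Complex.exp (Lz z ξ)) ξ (Pi.single i 1) * φ ξ) := by
    apply Continuous.integrable_of_hasCompactSupport
    · rw [hfd]
      simp only [ContinuousLinearMap.smul_apply]
      exact ((contE.smul continuous_const).mul h1.continuous)
    · apply HasCompactSupport.mul_left h2
  have I2 : Integrable (fun ξ : Fin n → ℝ => Complex.exp (Lz z ξ) * Dop i φ ξ) := by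
    apply Continuous.integrable_of_hasCompactSupport
      (contE.mul (Dop_continuous h1))
      (HasCompactSupport.mul_left (Dop_compactSupport h2))
  have I3 : Integrable (fun ξ : Fin n → ℝ => Complex.exp (Lz z ξ) * φ ξ) :=
    Continuous.integrable_of_hasCompactSupport (contE.mul h1.continuous)
      (HasCompactSupport.mul_left h2)
  have key := integral_mul_fderiv_eq_neg_fderiv_mul_of_integrable
    (f := fun ξ : Fin n → ℝ => Complex.exp (Lz z ξ)) (g := φ) (v := Pi.single i 1)
    I1 I2 I3 (fun ξ _ => (Lz_hasFDerivAt z ξ).differentiableAt)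
    (fun ξ _ => h1.differentiable (by simp) ξ)
  rw [show (fun ξ : Fin n → ℝ => Complex.exp (Lz z ξ) * Dop i φ ξ)
      = fun ξ : Fin n → ℝ => Complex.exp (Lz z ξ) * fderiv ℝ φ ξ (Pi.single i 1) from rfl]
  rw [key, hfd]
  simp only [ContinuousLinearMap.smul_apply, Lz_single, smul_eq_mul]
  rw [← integral_const_mul, ← integral_neg]
  congr 1; funext ξ; ring

lemma iter_smooth {n : ℕ} (i : Fin n) (φ : (Fin n → ℝ) → ℂ) (h1 : ContDiff ℝ (⊤ : ℕ∞) φ) (k : ℕ) :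
    ContDiff ℝ (⊤ : ℕ∞) ((Dop i)^[k] φ) := by
  induction k with
  | zero => exact h1
  | succ k ih => rw [Function.iterate_succ_apply']; exact Dop_contDiff ih

lemma iter_compact {n : ℕ} (i : Fin n) (φ : (Fin n → ℝ) → ℂ) (h2 : HasCompactSupport φ) (k : ℕ) :
    HasCompactSupport ((Dop i)^[k] φ) := by
  induction k with
  | zero => exact h2
  | succ k ih => rw [Function.iterate_succ_apply']; exact Dop_compactSupport ih

lemma iter_tsupport {n : ℕ} (i : Fin n) (φ : (Fin n → ℝ) → ℂ) (k : ℕ) :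
    tsupport ((Dop i)^[k] φ) ⊆ tsupport φ := by
  induction k with
  | zero => exact subset_rfl
  | succ k ih => rw [Function.iterate_succ_apply']; exact subset_trans Dop_tsupport ih

lemma iter_eq {n : ℕ} (z : Fin n → ℂ) (φ : (Fin n → ℝ) → ℂ)
    (h1 : ContDiff ℝ (⊤ : ℕ∞) φ) (h2 : HasCompactSupport φ) (i : Fin n) (k : ℕ) :
    (∫ ξ : Fin n → ℝ, Complex.exp (Lz z ξ) * (Dop i)^[k] φ ξ)
      = (-(2 * Real.pi * Complex.I * z i))^k * ∫ ξ : Fin n → ℝ, Complex.exp (Lz z ξ) * φ ξ := by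
  induction k with
  | zero => simp
  | succ k ih =>
    rw [Function.iterate_succ_apply',
      step z _ (iter_smooth i φ h1 k) (iter_compact i φ h2 k) i, ih, pow_succ]
    ring

lemma re_Lz {n : ℕ} (x y : Fin n → ℝ) (ξ : Fin n → ℝ) :
    (Lz (fun j => (x j : ℂ) + (y j : ℂ) * Complex.I) ξ).re
      = -(2 * Real.pi * ∑ j, y j * ξ j) := by
  rw [Lz_apply]
  have him : (∑ j, ((x j : ℂ) + (y j : ℂ) * Complex.I) * (ξ j : ℂ)).im = ∑ j, y j * ξ j := by
    rw [Complex.im_sum]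
    apply Finset.sum_congr rfl
    intro j _
    simp [Complex.add_im, Complex.mul_im]
  simp [Complex.mul_re, Complex.mul_im, him]

lemma norm_bound {n : ℕ} (x y : Fin n → ℝ) (φ : (Fin n → ℝ) → ℂ)
    (h1 : ContDiff ℝ (⊤ : ℕ∞) φ) (h2 : HasCompactSupport φ)
    (hy : ∀ ξ ∈ tsupport φ, 0 ≤ ∑ j, y j * ξ j) :
    ‖∫ ξ : Fin n → ℝ, Complex.exp (Lz (mkC x y) ξ) * φ ξ‖ ≤ ∫ ξ : Fin n → ℝ, ‖φ ξ‖ := by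
  refine le_trans (norm_integral_le_integral_norm _) ?_
  have contE : Continuous fun ξ : Fin n → ℝ => Complex.exp (Lz (mkC x y) ξ) :=
    Complex.continuous_exp.comp (Lz (mkC x y)).continuous
  apply integral_mono
  · exact (Continuous.integrable_of_hasCompactSupport (contE.mul h1.continuous)
      (HasCompactSupport.mul_left h2)).norm
  · exact (Continuous.integrable_of_hasCompactSupport h1.continuous h2).norm
  · intro ξ
    simp only []
    by_cases hξ : ξ ∈ tsupport φ
    · show ‖_ * _‖ ≤ _
      rw [norm_mul]
      have : ‖Complex.exp (Lz (mkC x y) ξ)‖ ≤ 1 := by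
        rw [Complex.norm_exp]
        apply Real.exp_le_one_iff.mpr
        rw [show mkC x y = fun j => (x j : ℂ) + (y j : ℂ) * Complex.I from rfl, re_Lz]
        refine neg_nonpos.mpr (mul_nonneg (by positivity) (hy ξ hξ))
      calc ‖Complex.exp (Lz (mkC x y) ξ)‖ * ‖φ ξ‖ ≤ 1 * ‖φ ξ‖ :=
            mul_le_mul_of_nonneg_right this (norm_nonneg _)
        _ = ‖φ ξ‖ := one_mul _
    · show ‖_ * _‖ ≤ _
      rw [image_eq_zero_of_notMem_tsupport hξ]
      simp

/-- `L¹` bound on `F₀`: for `ψ ∈ C_c^∞` supported in the dual cone `Ω*`,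
`|F₀(x+iy)| ≲ min(1, |x|^{-2n})` uniformly in `y ∈ Ω`, so that
`sup_{y∈Ω} ∫ |F₀(x+iy)| dx < ∞`, i.e. `F₀ ∈ H¹(T_Ω)`. -/
theorem FL_H1_bound {n m : ℕ} (e : Fin m → (Fin n → ℝ))
    (ψ : (Fin n → ℝ) → ℝ) (hψsmooth : ContDiff ℝ (⊤ : ℕ∞) ψ)
    (hψsupp : HasCompactSupport ψ)
    (hψcone : tsupport ψ ⊆ dualCone (coneOf e)) :
    (∃ C : ℝ, 0 < C ∧ ∀ y ∈ coneOf e, ∀ x : Fin n → ℝ,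
        ‖FL ψ (mkC x y)‖ ≤ C ∧
        (1 ≤ enorm' x → ‖FL ψ (mkC x y)‖ ≤ C * (enorm' x) ^ (-(2 * n : ℝ)))) ∧
    ∃ B : ℝ, ∀ y ∈ coneOf e, ∫ x : Fin n → ℝ, ‖FL ψ (mkC x y)‖ ≤ B := by
  classical
  set φ0 : (Fin n → ℝ) → ℂ := fun ξ => (ψ ξ : ℂ) with hφ0
  have h1 : ContDiff ℝ (⊤ : ℕ∞) φ0 := Complex.ofRealCLM.contDiff.comp hψsmooth
  have hsupp_eq : Function.support φ0 = Function.support ψ := by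
    ext ξ; simp [hφ0, Function.mem_support, Complex.ofReal_eq_zero]
  have hts : tsupport φ0 = tsupport ψ := by
    unfold tsupport; rw [hsupp_eq]
  have h2 : HasCompactSupport φ0 := by
    unfold HasCompactSupport
    rw [hts]; exact hψsupp
  have hFLeq : ∀ z : Fin n → ℂ, FL ψ z = ∫ ξ : Fin n → ℝ, Complex.exp (Lz z ξ) * φ0 ξ := by
    intro z; unfold FL; congr 1; funext ξ; rw [Lz_apply]
  -- positivity of y·ξ on supports
  have hpos : ∀ y ∈ coneOf e, ∀ (φ : (Fin n → ℝ) → ℂ), tsupport φ ⊆ tsupport φ0 →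
      ∀ ξ ∈ tsupport φ, 0 ≤ ∑ j, y j * ξ j := by
    intro y hy φ hsub ξ hξ
    exact hψcone (hts ▸ hsub hξ) y hy
  -- constants
  set A : Fin n → ℝ := fun i => ∫ ξ : Fin n → ℝ, ‖(Dop i)^[2*n] φ0 ξ‖ with hA
  have hAnn : ∀ i, 0 ≤ A i := fun i => integral_nonneg (fun ξ => norm_nonneg _)
  set I0 : ℝ := ∫ ξ : Fin n → ℝ, ‖φ0 ξ‖ with hI0
  have hI0nn : 0 ≤ I0 := integral_nonneg (fun ξ => norm_nonneg _)
  set C : ℝ := 1 + I0 + (n : ℝ)^n * ∑ i, A i with hC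
  have hTnn : 0 ≤ (n : ℝ)^n * ∑ i, A i :=
    mul_nonneg (by positivity) (Finset.sum_nonneg fun i _ => hAnn i)
  have hCpos : 0 < C := by rw [hC]; linarith
  have main : ∀ y ∈ coneOf e, ∀ x : Fin n → ℝ,
      ‖FL ψ (mkC x y)‖ ≤ C ∧
      (1 ≤ enorm' x → ‖FL ψ (mkC x y)‖ ≤ C * (enorm' x) ^ (-(2 * n : ℝ))) := by
    intro y hy x
    have hb1 : ‖FL ψ (mkC x y)‖ ≤ I0 := by
      rw [hFLeq]
      exact norm_bound x y φ0 h1 h2 (hpos y hy φ0 subset_rfl)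
    constructor
    · rw [hC]; linarith
    · intro hex
      -- n is positive
      have hn : 0 < n := by
        rcases Nat.eq_zero_or_pos n with h0 | h; swap; · exact h
        exfalso
        have : enorm' x = 0 := by
          rw [enorm']; subst h0; simp
        rw [this] at hex; linarith
      haveI : Nonempty (Fin n) := ⟨⟨0, hn⟩⟩
      obtain ⟨i, -, hi⟩ := Finset.exists_max_image Finset.univ (fun j => |x j|)
        ⟨Classical.arbitrary (Fin n), Finset.mem_univ _⟩
      have hi' : ∀ j, |x j| ≤ |x i| := fun j => hi j (Finset.mem_univ j)
      -- decay estimate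
      have hiter := iter_eq (mkC x y) φ0 h1 h2 i (2*n)
      have hnorm2n : ‖∫ ξ : Fin n → ℝ, Complex.exp (Lz (mkC x y) ξ) * (Dop i)^[2*n] φ0 ξ‖
          ≤ A i :=
        norm_bound x y _ (iter_smooth i φ0 h1 (2*n)) (iter_compact i φ0 h2 (2*n))
          (hpos y hy _ (iter_tsupport i φ0 (2*n)))
      rw [hiter, norm_mul, norm_pow] at hnorm2n
      have hzre : |x i| ≤ ‖(-(2 * (Real.pi:ℂ) * Complex.I * mkC x y i))‖ := by
        rw [norm_neg]
        have h1' : ‖2 * (Real.pi:ℂ) * Complex.I * mkC x y i‖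
            = (2 * Real.pi) * ‖mkC x y i‖ := by
          rw [norm_mul, norm_mul, norm_mul]
          rw [Complex.norm_real, Complex.norm_I, Real.norm_eq_abs,
            _root_.abs_of_nonneg Real.pi_pos.le]
          norm_num
        have h2' : |x i| ≤ ‖mkC x y i‖ := by
          have : (mkC x y i).re = x i := by simp [mkC]
          rw [← this]
          exact Complex.abs_re_le_norm _
        have h3' : (1:ℝ) ≤ 2 * Real.pi := by
          have := Real.pi_gt_three; linarith
        calc |x i| = 1 * |x i| := (one_mul _).symm
          _ ≤ (2 * Real.pi) * ‖mkC x y i‖ :=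
              mul_le_mul h3' h2' (abs_nonneg _) (by linarith)
          _ = _ := h1'.symm
      have hxpow : |x i|^(2*n) * ‖FL ψ (mkC x y)‖ ≤ A i := by
        rw [hFLeq]
        calc |x i|^(2*n) * ‖∫ ξ : Fin n → ℝ, Complex.exp (Lz (mkC x y) ξ) * φ0 ξ‖
            ≤ ‖(-(2 * (Real.pi:ℂ) * Complex.I * mkC x y i))‖^(2*n)
              * ‖∫ ξ : Fin n → ℝ, Complex.exp (Lz (mkC x y) ξ) * φ0 ξ‖ := by
              apply mul_le_mul_of_nonneg_right _ (norm_nonneg _)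
              exact pow_le_pow_left₀ (abs_nonneg _) hzre _
          _ ≤ A i := hnorm2n
      -- from euclidean norm to |x i|
      have hepos : (0:ℝ) < enorm' x := lt_of_lt_of_le one_pos hex
      have hsumsq : (enorm' x)^2 ≤ (n : ℝ) * (x i)^2 := by
        rw [enorm', Real.sq_sqrt (Finset.sum_nonneg fun j _ => sq_nonneg _)]
        calc ∑ j, (x j)^2 ≤ ∑ _j : Fin n, (x i)^2 := by
              apply Finset.sum_le_sum
              intro j _
              rw [← _root_.sq_abs (x j), ← _root_.sq_abs (x i)]
              exact pow_le_pow_left₀ (abs_nonneg _) (hi' j) 2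
          _ = (n : ℝ) * (x i)^2 := by simp [Finset.sum_const, mul_comm]
      have hpow2n : (enorm' x)^(2*n) ≤ (n:ℝ)^n * |x i|^(2*n) := by
        calc (enorm' x)^(2*n) = ((enorm' x)^2)^n := by rw [← pow_mul]
          _ ≤ ((n : ℝ) * (x i)^2)^n :=
              pow_le_pow_left₀ (sq_nonneg _) hsumsq n
          _ = (n:ℝ)^n * ((x i)^2)^n := mul_pow _ _ n
          _ = (n:ℝ)^n * |x i|^(2*n) := by rw [← _root_.sq_abs, ← pow_mul]
      -- final computation
      have hrpow : (enorm' x) ^ (-(2 * n : ℝ)) = ((enorm' x)^(2*n))⁻¹ := by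
        rw [← Real.rpow_natCast (enorm' x) (2*n), ← Real.rpow_neg hepos.le]
        norm_num
      have hppos : (0:ℝ) < (enorm' x)^(2*n) := pow_pos hepos _
      rw [hrpow, ← div_eq_mul_inv, le_div_iff₀ hppos]
      have hAle : A i ≤ ∑ j, A j := Finset.single_le_sum (fun j _ => hAnn j) (Finset.mem_univ i)
      calc ‖FL ψ (mkC x y)‖ * (enorm' x)^(2*n)
          ≤ ‖FL ψ (mkC x y)‖ * ((n:ℝ)^n * |x i|^(2*n)) :=
            mul_le_mul_of_nonneg_left hpow2n (norm_nonneg _)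
        _ = (n:ℝ)^n * (|x i|^(2*n) * ‖FL ψ (mkC x y)‖) := by ring
        _ ≤ (n:ℝ)^n * A i := mul_le_mul_of_nonneg_left hxpow (by positivity)
        _ ≤ (n:ℝ)^n * ∑ j, A j := mul_le_mul_of_nonneg_left hAle (by positivity)
        _ ≤ C := by rw [hC]; linarith
  refine ⟨⟨C, hCpos, main⟩, ?_⟩
  rcases Nat.eq_zero_or_pos n with hn0 | hn
  · -- n = 0 : the space is a point with measure 1
    have huniv : (volume (Set.univ : Set (Fin n → ℝ))) = 1 := by
      subst hn0
      rw [← Set.pi_univ Set.univ, MeasureTheory.volume_pi_pi]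
      simp
    haveI : IsFiniteMeasure (volume : Measure (Fin n → ℝ)) :=
      ⟨by rw [huniv]; exact ENNReal.one_lt_top⟩
    refine ⟨∫ _x : Fin n → ℝ, C, fun y hy => ?_⟩
    exact integral_mono_of_nonneg (Filter.Eventually.of_forall fun x => norm_nonneg _)
      (integrable_const C) (Filter.Eventually.of_forall fun x => (main y hy x).1)
  · -- n ≥ 1 : integrable majorant
    set g : (Fin n → ℝ) → ℝ := fun x => C * 4^n * (1 + ‖x‖) ^ (-(2*n : ℝ)) with hg
    have hfin : (Module.finrank ℝ (Fin n → ℝ) : ℝ) < (2*n : ℝ) := by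
      rw [Module.finrank_fin_fun]
      have : (n:ℝ) ≥ 1 := by exact_mod_cast hn
      linarith
    have hgint : Integrable g := by
      rw [hg]
      simpa [mul_assoc] using (integrable_one_add_norm (E := Fin n → ℝ) (μ := volume) hfin
        |>.const_mul (C * 4^n))
    have h2e : (2:ℝ) ^ (-(2*n : ℝ)) = ((4:ℝ)^n)⁻¹ := by
      rw [Real.rpow_neg (by norm_num)]
      congr 1
      rw [show (2*n : ℝ) = ((2*n : ℕ) : ℝ) by push_cast; ring, Real.rpow_natCast,
        pow_mul]
      norm_num
    have hC4 : (0:ℝ) ≤ C * 4^n := mul_nonneg hCpos.le (pow_nonneg (by norm_num) n)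
    refine ⟨∫ x : Fin n → ℝ, g x, fun y hy => ?_⟩
    apply integral_mono_of_nonneg (Filter.Eventually.of_forall fun x => norm_nonneg _) hgint
    apply Filter.Eventually.of_forall
    intro x
    have hxe : ‖x‖ ≤ enorm' x := by
      refine pi_norm_le_iff_of_nonneg (Real.sqrt_nonneg _) |>.mpr fun j => ?_
      rw [Real.norm_eq_abs, ← Real.sqrt_sq_eq_abs]
      exact Real.sqrt_le_sqrt (Finset.single_le_sum (f := fun j => (x j)^2)
        (fun j _ => sq_nonneg _) (Finset.mem_univ j))
    by_cases hx1 : (1:ℝ) ≤ ‖x‖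
    · have hex : 1 ≤ enorm' x := le_trans hx1 hxe
      have hmain := (main y hy x).2 hex
      have s1 : (enorm' x) ^ (-(2*n:ℝ)) ≤ ‖x‖ ^ (-(2*n:ℝ)) :=
        Real.rpow_le_rpow_of_nonpos (lt_of_lt_of_le one_pos hx1) hxe
          (by positivity |> neg_nonpos_of_nonneg)
      have s2 : ‖x‖ ^ (-(2*n:ℝ)) ≤ 4^n * (1 + ‖x‖) ^ (-(2*n:ℝ)) := by
        have h2x : (1 + ‖x‖) ≤ 2 * ‖x‖ := by linarith
        have hb : (0:ℝ) < 1 + ‖x‖ := by linarith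
        have s3 : (2 * ‖x‖) ^ (-(2*n:ℝ)) ≤ (1 + ‖x‖) ^ (-(2*n:ℝ)) :=
          Real.rpow_le_rpow_of_nonpos hb h2x (by positivity |> neg_nonpos_of_nonneg)
        have s4 : (2 * ‖x‖) ^ (-(2*n:ℝ)) = ((4:ℝ)^n)⁻¹ * ‖x‖ ^ (-(2*n:ℝ)) := by
          rw [Real.mul_rpow (by norm_num) (norm_nonneg _), h2e]
        calc ‖x‖ ^ (-(2*n:ℝ)) = 4^n * ((2 * ‖x‖) ^ (-(2*n:ℝ))) := by
              rw [s4]; field_simp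
          _ ≤ 4^n * (1 + ‖x‖) ^ (-(2*n:ℝ)) :=
              mul_le_mul_of_nonneg_left s3 (by positivity)
      calc ‖FL ψ (mkC x y)‖ ≤ C * (enorm' x) ^ (-(2*n:ℝ)) := hmain
        _ ≤ C * (‖x‖ ^ (-(2*n:ℝ))) := mul_le_mul_of_nonneg_left s1 hCpos.le
        _ ≤ C * (4^n * (1 + ‖x‖) ^ (-(2*n:ℝ))) := mul_le_mul_of_nonneg_left s2 hCpos.le
        _ = g x := by rw [hg]; ring
    · push_neg at hx1
      have hble : ((4:ℝ)^n)⁻¹ ≤ (1 + ‖x‖) ^ (-(2*n:ℝ)) := by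
        rw [← h2e]
        exact Real.rpow_le_rpow_of_nonpos (by positivity) (by linarith)
          (by positivity |> neg_nonpos_of_nonneg)
      calc ‖FL ψ (mkC x y)‖ ≤ C := (main y hy x).1
        _ = C * 4^n * ((4:ℝ)^n)⁻¹ := by field_simp
        _ ≤ C * 4^n * (1 + ‖x‖) ^ (-(2*n:ℝ)) := mul_le_mul_of_nonneg_left hble hC4
        _ = g x := by rw [hg]
end
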